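/- Let θ : ℝ → ℝ be differentiable at some t with θ(t) ∈ (−1, 1) and |θ'(t)| ≤ B for a constant B ≥ 0. Then t ↦ υ(θ(t)) is differentiable at t and |(υ ∘ θ)'(t)| ≤ max(π·v̄/(2·c), 2·v̄·c/π)·B. -/

import Mathlib

open Real

/-! Writing `a = π / (2c)` and `T = tan (πθ/2)`, the chain rule gives
`υ'(θ) = -v̄ · a (1 + T²) / (1 + a²T²)`. The ratio `(1 + T²) / (1 + a²T²)` lies between
`1` and `a⁻²`, so `|υ'| ≤ v̄ · max a a⁻¹`, which is the claimed constant; the factor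
`θ'(t)` then contributes at most `B`. -/

theorem mul_one_add_sq_div_one_add_mul_sq_le_max {a : ℝ} (ha : 0 < a) (T : ℝ) :
    a * (1 + T ^ 2) / (1 + (a * T) ^ 2) ≤ max a a⁻¹ := by
  have hden : 0 < 1 + (a * T) ^ 2 := by positivity
  rw [div_le_iff₀ hden]
  rcases le_total a 1 with ha1 | ha1
  · have ha2 : a ^ 2 ≤ 1 := pow_le_one₀ ha.le ha1
    calc a * (1 + T ^ 2) = a⁻¹ * (a ^ 2 * (1 + T ^ 2)) := by field_simp
      _ ≤ a⁻¹ * (1 + (a * T) ^ 2) := by gcongr; nlinarith [sq_nonneg T]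
      _ ≤ max a a⁻¹ * (1 + (a * T) ^ 2) := by gcongr; exact le_max_right _ _
  · have ha2 : 1 ≤ a ^ 2 := one_le_pow₀ ha1
    calc a * (1 + T ^ 2) ≤ a * (1 + (a * T) ^ 2) := by
          gcongr a * (1 + ?_)
          rw [mul_pow]
          nlinarith [sq_nonneg T]
      _ ≤ max a a⁻¹ * (1 + (a * T) ^ 2) := by gcongr; exact le_max_left _ _

theorem hasDerivAt_arctan_const_mul_tan (a : ℝ) {x : ℝ} (hx : cos x ≠ 0) :
    HasDerivAt (fun y => arctan (a * tan y)) (a * (1 + tan x ^ 2) / (1 + (a * tan x) ^ 2)) x := by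
  have h := ((hasDerivAt_tan hx).const_mul a).arctan
  rwa [one_div (cos x ^ 2), ← inv_one_add_tan_sq hx, inv_inv, one_div_mul_eq_div] at h

noncomputable def controllerMap (vbar c θ : ℝ) : ℝ :=
  -(2 * vbar / π) * arctan (π / (2 * c) * tan (π / 2 * θ))

theorem hasDerivAt_controllerMap (vbar c : ℝ) {θ : ℝ} (hθ : θ ∈ Set.Ioo (-1 : ℝ) 1) :
    HasDerivAt (controllerMap vbar c)
      (-vbar * (π / (2 * c) * (1 + tan (π / 2 * θ) ^ 2) /
        (1 + (π / (2 * c) * tan (π / 2 * θ)) ^ 2))) θ := by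
  have hcos : cos (π / 2 * θ) ≠ 0 := by
    refine (cos_pos_of_mem_Ioo ⟨?_, ?_⟩).ne' <;> nlinarith [pi_pos, hθ.1, hθ.2]
  have h := ((hasDerivAt_arctan_const_mul_tan (π / (2 * c)) hcos).comp θ
    ((hasDerivAt_id θ).const_mul (π / 2))).const_mul (-(2 * vbar / π))
  refine h.congr_deriv ?_
  field_simp

theorem abs_deriv_controllerMap_le {vbar c θ : ℝ} (hv : 0 ≤ vbar) (hc : 0 < c)
    (hθ : θ ∈ Set.Ioo (-1 : ℝ) 1) :
    |deriv (controllerMap vbar c) θ| ≤ max (π * vbar / (2 * c)) (2 * vbar * c / π) := by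
  have ha : 0 < π / (2 * c) := by positivity
  have hK : max (π * vbar / (2 * c)) (2 * vbar * c / π) =
      vbar * max (π / (2 * c)) (π / (2 * c))⁻¹ := by
    rw [mul_max_of_nonneg _ _ hv, inv_div]; ring_nf
  rw [(hasDerivAt_controllerMap vbar c hθ).deriv, hK, abs_mul, abs_neg, abs_of_nonneg hv,
    abs_of_nonneg (by positivity)]
  exact mul_le_mul_of_nonneg_left (mul_one_add_sq_div_one_add_mul_sq_le_max ha _) hv

theorem controller_composition_deriv_bound_general (vbar c B : ℝ) (hv : 0 < vbar) (hc : 0 < c)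
    (θ : ℝ → ℝ) (t : ℝ)
    (hθ : DifferentiableAt ℝ θ t)
    (hθt : θ t ∈ Set.Ioo (-1 : ℝ) 1)
    (hθ' : |deriv θ t| ≤ B) :
    DifferentiableAt ℝ
      (fun s : ℝ => -(2 * vbar / π) * Real.arctan (π / (2 * c) * Real.tan (π / 2 * θ s))) t ∧
    |deriv (fun s : ℝ => -(2 * vbar / π) * Real.arctan (π / (2 * c) * Real.tan (π / 2 * θ s))) t|
      ≤ max (π * vbar / (2 * c)) (2 * vbar * c / π) * B := by
  have hυ := (hasDerivAt_controllerMap vbar c hθt).differentiableAt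
  refine ⟨hυ.comp t hθ, ?_⟩
  change |deriv (controllerMap vbar c ∘ θ) t| ≤ _
  have hυ' := abs_deriv_controllerMap_le hv.le hc hθt
  rw [deriv_comp t hυ hθ, abs_mul]
  exact mul_le_mul hυ' hθ' (abs_nonneg _) ((abs_nonneg _).trans hυ')

/-- For the controller map
`υ(θ) = −(2·v̄/π)·arctan((π/(2·c))·tan((π/2)·θ))` (with `v̄ > 0`, `c > 0`):
if `θ : ℝ → ℝ` is differentiable at `t` with `θ(t) ∈ (−1, 1)` and `|θ'(t)| ≤ B`
for a constant `B ≥ 0`, then `t ↦ υ(θ(t))` is differentiable at `t` and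
`|(υ ∘ θ)'(t)| ≤ max(π·v̄/(2·c), 2·v̄·c/π)·B`. -/
theorem controller_composition_deriv_bound (vbar c B : ℝ) (hv : 0 < vbar) (hc : 0 < c)
    (hB : 0 ≤ B) (θ : ℝ → ℝ) (t : ℝ)
    (hθ : DifferentiableAt ℝ θ t)
    (hθt : θ t ∈ Set.Ioo (-1 : ℝ) 1)
    (hθ' : |deriv θ t| ≤ B) :
    DifferentiableAt ℝ
      (fun s : ℝ => -(2 * vbar / π) * Real.arctan (π / (2 * c) * Real.tan (π / 2 * θ s))) t ∧
    |deriv (fun s : ℝ => -(2 * vbar / π) * Real.arctan (π / (2 * c) * Real.tan (π / 2 * θ s))) t|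
      ≤ max (π * vbar / (2 * c)) (2 * vbar * c / π) * B :=
  controller_composition_deriv_bound_general vbar c B hv hc θ t hθ hθt hθ'
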